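/- arXiv:0704.2264 — 3 statements merged into one kernel-verified Lean document; each statement's English description precedes it below -/
import Mathlib

section
/- For all integers s, t ≥ 3, the derivative of the chromatic polynomial of X(s,t) evaluated at x = 2 equals 2((-1)^s + (-1)^t + (-1)^{s+t}). -/
/-- The number of proper colorings of `G` with a palette of `k` colors. -/
noncomputable def numColorings {V : Type} [Fintype V] (G : SimpleGraph V) (k : ℕ) : ℕ :=
  Nat.card {f : V → Fin k // ∀ u v, G.Adj u v → f u ≠ f v}

/-- `P` is the chromatic polynomial of `G`: for every natural number `k`, evaluating `P`
at `k` gives the number of proper `k`-colorings of `G`. -/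
def IsChromaticPolynomial {V : Type} [Fintype V] (G : SimpleGraph V) (P : Polynomial ℝ) : Prop :=
  ∀ k : ℕ, P.eval (k : ℝ) = numColorings G k

/-- The adjacency-generating relation of the graph `X(s,t)`: the vertices `v0, v1, v2, v3, v4`
are `Sum.inl 0, …, Sum.inl 4`, the independent set `S` is `Fin s` (as `Sum.inr (Sum.inl _)`)
and the independent set `T` is `Fin t` (as `Sum.inr (Sum.inr _)`).  The edges are: `v1v2`,
`v3v4`, every vertex of `S` joined to each of `v0, v1, v3`, and every vertex of `T` joined
to each of `v0, v2, v4`. -/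
def XAdj (s t : ℕ) (x y : Fin 5 ⊕ Fin s ⊕ Fin t) : Prop :=
  (x = Sum.inl 1 ∧ y = Sum.inl 2) ∨ (x = Sum.inl 3 ∧ y = Sum.inl 4) ∨
    ((∃ i : Fin s, x = Sum.inr (Sum.inl i)) ∧ (y = Sum.inl 0 ∨ y = Sum.inl 1 ∨ y = Sum.inl 3)) ∨
    ((∃ j : Fin t, x = Sum.inr (Sum.inr j)) ∧ (y = Sum.inl 0 ∨ y = Sum.inl 2 ∨ y = Sum.inl 4))

/-- The graph `X(s,t)`. -/
def graphX (s t : ℕ) : SimpleGraph (Fin 5 ⊕ Fin s ⊕ Fin t) :=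
  SimpleGraph.fromRel (XAdj s t)

/-!
Colour `v0, …, v4` first, with `a, b, c, d, e` where `b ≠ c` and `d ≠ e`: each vertex of `S`
then has `k - #{a, b, d}` free colours and each vertex of `T` has `k - #{a, c, e}`. Summing over
`b ≠ c`, `d ≠ e` by inclusion–exclusion, and using that `#{a, b, d}` is symmetric in `b, d`, the
count becomes `k · F(k)` for a polynomial `F` assembled from the power sums
`n (X - n)^m + (X - n) (X - n - 1)^m`, `n = 1, 2` (the cases `b = a` and `b ≠ a`). At `X = 2`
these take the values `1` and `0`, with derivatives `m` and `(-1)^m`; hence `F(2) = 0`,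
`F'(2) = (-1)^s + (-1)^t + (-1)^(s+t)`, and `(X · F)'(2) = F(2) + 2 F'(2)`.
-/

open Finset Polynomial

lemma IsChromaticPolynomial.eq {V : Type} [Fintype V] {G : SimpleGraph V} {P Q : ℝ[X]}
    (hP : IsChromaticPolynomial G P) (hQ : IsChromaticPolynomial G Q) : P = Q :=
  eq_of_infinite_eval_eq P Q <| Set.infinite_of_injective_forall_mem Nat.cast_injective
    fun k => (hP k).trans (hQ k).symm

section Sums

variable {ι R : Type*} [Fintype ι] [DecidableEq ι] [CommRing R]

lemma sum_ite_mem_else (s : Finset ι) (u v : R) :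
    ∑ x, (if x ∈ s then u else v) = #s * u + (Fintype.card ι - #s) * v := by
  rw [sum_ite, filter_mem_eq_inter, univ_inter, sum_const, sum_const, nsmul_eq_mul,
    nsmul_eq_mul, filter_not, filter_mem_eq_inter, univ_inter, ← compl_eq_univ_sdiff,
    card_compl, Nat.cast_sub (card_le_univ s)]

lemma sum_ite_eq_else (a : ι) (u v : R) :
    ∑ x, (if x = a then u else v) = u + (Fintype.card ι - 1) * v := by
  simpa using sum_ite_mem_else {a} u v

lemma sum_sum_ite_ne_mul (u v : ι → R) :
    ∑ i, ∑ j, (if i ≠ j then u i * v j else 0) = (∑ i, u i) * (∑ j, v j) - ∑ i, u i * v i := by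
  have h (i j : ι) :
      (if i ≠ j then u i * v j else 0) = u i * v j - if i = j then u i * v j else 0 := by
    split_ifs <;> simp_all
  simp_rw [h, sum_sub_distrib, sum_ite_eq, mem_univ, if_true, sum_mul_sum]

lemma sum_ite_ne_and_ne_mul (x y : ι → ι → R) :
    ∑ b, ∑ c, ∑ d, ∑ e, (if b ≠ c ∧ d ≠ e then x b d * y c e else 0) =
      (∑ b, ∑ d, x b d) * (∑ c, ∑ e, y c e) - ∑ b, (∑ d, x b d) * (∑ e, y b e)
        - ∑ d, (∑ b, x b d) * (∑ c, y c d) + ∑ b, ∑ d, x b d * y b d := by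
  calc _ = ∑ b, ∑ c, if b ≠ c then ∑ d, ∑ e, (if d ≠ e then x b d * y c e else 0) else 0 := by
          simp_rw [ite_and, sum_ite_irrel, sum_const_zero]
    _ = ∑ b, ∑ c, ((if b ≠ c then (∑ d, x b d) * (∑ e, y c e) else 0)
          - ∑ d, if b ≠ c then x b d * y c d else 0) := by
          simp_rw [sum_sum_ite_ne_mul, sum_ite_irrel, sum_const_zero]
          refine sum_congr rfl fun b _ => sum_congr rfl fun c _ => ?_
          split_ifs <;> simp
    _ = _ := by
          have hswap : ∑ b, ∑ c, ∑ d, (if b ≠ c then x b d * y c d else 0) =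
              ∑ d, ((∑ b, x b d) * (∑ c, y c d) - ∑ b, x b d * y b d) := by
            simp_rw [← sum_sum_ite_ne_mul]
            exact (sum_congr rfl fun _ _ => sum_comm).trans sum_comm
          simp_rw [sum_sub_distrib]
          rw [sum_sum_ite_ne_mul (fun b => ∑ d, x b d) (fun c => ∑ e, y c e),
            sum_comm (s := univ), hswap, sum_sub_distrib, sum_comm (f := fun d b => x b d * y b d)]
          ring

lemma card_subtype_prod_mem {α β : Type*} [Fintype α] [Fintype β] [DecidableEq β]
    (p : α → Prop) [DecidablePred p] (A : α → Finset β) :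
    Fintype.card {x : α × β // p x.1 ∧ x.2 ∈ A x.1} = ∑ a, if p a then #(A a) else 0 := by
  rw [Fintype.card_congr (Equiv.subtypeProdEquivSigmaSubtype fun a b => p a ∧ b ∈ A a),
    Fintype.card_sigma]
  refine sum_congr rfl fun a _ => ?_
  split_ifs with ha <;> simp [ha]

end Sums

section Avoiding

variable {K : Type*} [Fintype K] [DecidableEq K]

def numAvoiding (a b c : K) : ℕ := #({a, b, c}ᶜ : Finset K)

lemma numAvoiding_comm (a b c : K) : numAvoiding a b c = numAvoiding a c b := by
  rw [numAvoiding, numAvoiding, pair_comm]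

lemma cast_numAvoiding (a b x : K) :
    (numAvoiding a b x : ℝ) =
      if x ∈ ({a, b} : Finset K) then (Fintype.card K - #{a, b} : ℝ)
      else Fintype.card K - #{a, b} - 1 := by
  have h : ({a, b, x} : Finset K) = insert x {a, b} := by
    ext; simp only [mem_insert, mem_singleton]; tauto
  rw [numAvoiding, card_compl, Nat.cast_sub (card_le_univ _), h, card_insert_eq_ite]
  split_ifs <;> push_cast <;> ring

-- At `X = #K`, this is `∑ x, (#K - #(insert x A)) ^ m` for any `A : Finset K` with `#A = n`.
noncomputable def avoidingPowSum (n m : ℕ) : ℝ[X] :=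
  (n : ℝ[X]) * (X - (n : ℝ[X])) ^ m + (X - (n : ℝ[X])) * (X - (n : ℝ[X]) - 1) ^ m

lemma sum_numAvoiding_pow (m : ℕ) (a b : K) :
    ∑ x, (numAvoiding a b x : ℝ) ^ m =
      if b = a then (avoidingPowSum 1 m).eval (Fintype.card K : ℝ)
      else (avoidingPowSum 2 m).eval (Fintype.card K : ℝ) := by
  have hcard : #({a, b} : Finset K) = if b = a then 1 else 2 := by
    split_ifs with h
    · simp [h]
    · exact card_pair (Ne.symm h)
  simp_rw [cast_numAvoiding, ite_pow, sum_ite_mem_else, avoidingPowSum, ← apply_ite, hcard]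
  split_ifs <;> simp

noncomputable def totalAvoidingPowSum (m : ℕ) : ℝ[X] :=
  avoidingPowSum 1 m + (X - 1) * avoidingPowSum 2 m

-- Counts the proper colourings of `X(s,t)` in which `v0` gets a prescribed colour.
noncomputable def fixedCenterPoly (s t : ℕ) : ℝ[X] :=
  totalAvoidingPowSum s * totalAvoidingPowSum t
    - 2 * (avoidingPowSum 1 s * avoidingPowSum 1 t
      + (X - 1) * (avoidingPowSum 2 s * avoidingPowSum 2 t))
    + totalAvoidingPowSum (s + t)

lemma sum_ite_ne_and_ne_numAvoiding (s t : ℕ) (a : K) :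
    ∑ b, ∑ c, ∑ d, ∑ e, (if b ≠ c ∧ d ≠ e then
        (numAvoiding a b d : ℝ) ^ s * (numAvoiding a c e : ℝ) ^ t else 0) =
      (fixedCenterPoly s t).eval (Fintype.card K : ℝ) := by
  set k : ℝ := (Fintype.card K : ℝ)
  set r : ℕ → K → ℝ := fun m b =>
    if b = a then (avoidingPowSum 1 m).eval k else (avoidingPowSum 2 m).eval k with hr
  have row (m : ℕ) (b : K) : ∑ d, (numAvoiding a b d : ℝ) ^ m = r m b := sum_numAvoiding_pow m a b
  have col (m : ℕ) (d : K) : ∑ b, (numAvoiding a b d : ℝ) ^ m = r m d := by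
    simp_rw [numAvoiding_comm a _ d]
    exact row m d
  have diag (b : K) : ∑ d, (numAvoiding a b d : ℝ) ^ s * (numAvoiding a b d : ℝ) ^ t =
      r (s + t) b := by
    simp_rw [← pow_add]
    exact row (s + t) b
  rw [sum_ite_ne_and_ne_mul]
  simp only [row, col, diag, hr, ite_mul_ite, sum_ite_eq_else]
  simp [fixedCenterPoly, totalAvoidingPowSum, k]
  ring

end Avoiding

section Counting

variable {K : Type*} [DecidableEq K] {s t : ℕ}

lemma graphX_proper_iff (f : Fin 5 ⊕ Fin s ⊕ Fin t → K) :
    (∀ u v, (graphX s t).Adj u v → f u ≠ f v) ↔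
      (f (.inl 1) ≠ f (.inl 2) ∧ f (.inl 3) ≠ f (.inl 4)) ∧
      (∀ i, f (.inr (.inl i)) ∉ ({f (.inl 0), f (.inl 1), f (.inl 3)} : Finset K)) ∧
      ∀ j, f (.inr (.inr j)) ∉ ({f (.inl 0), f (.inl 2), f (.inl 4)} : Finset K) := by
  simp only [graphX, SimpleGraph.fromRel_adj, XAdj, ne_eq, mem_insert, mem_singleton, not_or]
  constructor
  · intro h
    refine ⟨⟨h _ _ ?_, h _ _ ?_⟩, fun i => ⟨h _ _ ?_, h _ _ ?_, h _ _ ?_⟩,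
      fun j => ⟨h _ _ ?_, h _ _ ?_, h _ _ ?_⟩⟩ <;> simp
  · rintro ⟨⟨h12, h34⟩, hS, hT⟩ u v ⟨-, huv | huv⟩ <;>
      rcases huv with ⟨rfl, rfl⟩ | ⟨rfl, rfl⟩ | ⟨⟨i, rfl⟩, rfl | rfl | rfl⟩ |
        ⟨⟨j, rfl⟩, rfl | rfl | rfl⟩ <;> grind

def splitColoring (s t : ℕ) (K : Type*) :
    (Fin 5 ⊕ Fin s ⊕ Fin t → K) ≃ (K × K × K × K × K) × (Fin s → K) × (Fin t → K) where
  toFun f := ((f (.inl 0), f (.inl 1), f (.inl 2), f (.inl 3), f (.inl 4)),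
    fun i => f (.inr (.inl i)), fun j => f (.inr (.inr j)))
  invFun p := Sum.elim ![p.1.1, p.1.2.1, p.1.2.2.1, p.1.2.2.2.1, p.1.2.2.2.2]
    (Sum.elim p.2.1 p.2.2)
  left_inv f := by
    funext v
    rcases v with i | i | j
    · fin_cases i <;> rfl
    all_goals rfl
  right_inv p := rfl

variable [Fintype K]

lemma card_proper_graphX :
    Nat.card {f : Fin 5 ⊕ Fin s ⊕ Fin t → K // ∀ u v, (graphX s t).Adj u v → f u ≠ f v} =
      ∑ a : K, ∑ b : K, ∑ c : K, ∑ d : K, ∑ e : K,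
        if b ≠ c ∧ d ≠ e then numAvoiding a b d ^ s * numAvoiding a c e ^ t else 0 := by
  let core : K × K × K × K × K → Prop := fun p => p.2.1 ≠ p.2.2.1 ∧ p.2.2.2.1 ≠ p.2.2.2.2
  let sat : K × K × K × K × K → Finset ((Fin s → K) × (Fin t → K)) := fun p =>
    Fintype.piFinset (fun _ => {p.1, p.2.1, p.2.2.2.1}ᶜ) ×ˢ
      Fintype.piFinset (fun _ => {p.1, p.2.2.1, p.2.2.2.2}ᶜ)
  have e := (splitColoring s t K).subtypeEquiv
    (p := fun f => ∀ u v, (graphX s t).Adj u v → f u ≠ f v)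
    (q := fun x => core x.1 ∧ x.2 ∈ sat x.1) fun f => by
      rw [graphX_proper_iff]
      simp only [core, sat, mem_product, Fintype.mem_piFinset, mem_compl]
      rfl
  rw [Nat.card_congr e, Nat.card_eq_fintype_card, card_subtype_prod_mem]
  simp only [Fintype.sum_prod_type, core, sat, card_product, Fintype.card_piFinset,
    prod_const, card_univ, Fintype.card_fin, numAvoiding]

lemma isChromaticPolynomial_graphX (s t : ℕ) :
    IsChromaticPolynomial (graphX s t) (X * fixedCenterPoly s t) := by
  intro k
  rw [numColorings, card_proper_graphX]
  push_cast
  simp [sum_ite_ne_and_ne_numAvoiding]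

end Counting

section AtTwo

variable {m : ℕ}

lemma eval_two_avoidingPowSum_one (hm : m ≠ 0) : (avoidingPowSum 1 m).eval 2 = 1 := by
  norm_num [avoidingPowSum, hm]

lemma eval_two_avoidingPowSum_two (hm : m ≠ 0) : (avoidingPowSum 2 m).eval 2 = 0 := by
  norm_num [avoidingPowSum, hm]

lemma eval_two_derivative_avoidingPowSum_one (hm : 2 ≤ m) :
    (derivative (avoidingPowSum 1 m)).eval 2 = m := by
  obtain ⟨n, rfl⟩ : ∃ n, m = n + 2 := ⟨m - 2, by omega⟩
  norm_num [avoidingPowSum, derivative_pow]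

lemma eval_two_derivative_avoidingPowSum_two (hm : 2 ≤ m) :
    (derivative (avoidingPowSum 2 m)).eval 2 = (-1) ^ m := by
  obtain ⟨n, rfl⟩ : ∃ n, m = n + 2 := ⟨m - 2, by omega⟩
  norm_num [avoidingPowSum, derivative_pow]

lemma eval_two_totalAvoidingPowSum (hm : m ≠ 0) : (totalAvoidingPowSum m).eval 2 = 1 := by
  simp [totalAvoidingPowSum, eval_two_avoidingPowSum_one hm, eval_two_avoidingPowSum_two hm]

lemma eval_two_derivative_totalAvoidingPowSum (hm : 2 ≤ m) :
    (derivative (totalAvoidingPowSum m)).eval 2 = m + (-1) ^ m := by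
  simp [totalAvoidingPowSum, eval_two_derivative_avoidingPowSum_one hm,
    eval_two_derivative_avoidingPowSum_two hm, eval_two_avoidingPowSum_two (by omega : m ≠ 0)]
  norm_num

variable {s t : ℕ}

lemma eval_two_fixedCenterPoly (hs : s ≠ 0) (ht : t ≠ 0) : (fixedCenterPoly s t).eval 2 = 0 := by
  simp [fixedCenterPoly, eval_two_totalAvoidingPowSum, eval_two_avoidingPowSum_one,
    eval_two_avoidingPowSum_two, hs, ht]
  norm_num

lemma eval_two_derivative_fixedCenterPoly (hs : 2 ≤ s) (ht : 2 ≤ t) :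
    (derivative (fixedCenterPoly s t)).eval 2 = (-1) ^ s + (-1) ^ t + (-1) ^ (s + t) := by
  have hs' : s ≠ 0 := by omega
  have ht' : t ≠ 0 := by omega
  simp [fixedCenterPoly, eval_two_totalAvoidingPowSum, eval_two_avoidingPowSum_one,
    eval_two_avoidingPowSum_two, eval_two_derivative_totalAvoidingPowSum,
    eval_two_derivative_avoidingPowSum_one, eval_two_derivative_avoidingPowSum_two,
    hs, ht, hs', ht', (by omega : 2 ≤ s + t)]
  ring

end AtTwo

/-- For all `s, t ≥ 3`, the derivative of the chromatic polynomial of `X(s,t)` evaluated at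
`x = 2` equals `2((-1)^s + (-1)^t + (-1)^(s+t))`. -/
theorem derivative_chromaticPolynomial_graphX_at_two (s t : ℕ) (hs : 3 ≤ s) (ht : 3 ≤ t)
    (P : Polynomial ℝ) (hP : IsChromaticPolynomial (graphX s t) P) :
    (Polynomial.derivative P).eval 2 =
      2 * ((-1 : ℝ) ^ s + (-1 : ℝ) ^ t + (-1 : ℝ) ^ (s + t)) := by
  rw [hP.eq (isChromaticPolynomial_graphX s t), derivative_mul, derivative_X, eval_add, eval_mul,
    eval_mul, eval_X, eval_one, one_mul, eval_two_fixedCenterPoly (by omega) (by omega),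
    eval_two_derivative_fixedCenterPoly (by omega) (by omega), zero_add]
end

section
/- For all odd integers s, t ≥ 3, the chromatic polynomial of Y(s,t) has a real root strictly between 1 and 2. -/
/-- The adjacency-generating relation of `Y(s,t)`: that of `X(s,t)` together with the
extra edge `v1v4`. -/
def YAdj (s t : ℕ) (x y : Fin 5 ⊕ Fin s ⊕ Fin t) : Prop :=
  XAdj s t x y ∨ (x = Sum.inl 1 ∧ y = Sum.inl 4)

/-- The graph `Y(s,t)`, obtained from `X(s,t)` by joining `v1` and `v4`. -/
def graphY (s t : ℕ) : SimpleGraph (Fin 5 ⊕ Fin s ⊕ Fin t) :=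
  SimpleGraph.fromRel (YAdj s t)

/-!
Colour `v₁, v₄` (necessarily differently) and `v₀` first: the rest splits into two independent
parts, `v₃` with `S` and `v₂` with `T`, which gives `P(Y(s,t), x)` in closed form. For odd `s, t`
the substitution `x = 2 - u` turns it into `(2 - u)(1 - u) u Q(u)` with `Q(0) = 1` and
`Q(1) < 0`, so `Q` has a root in `(0, 1)`.
-/

open Finset

theorem SimpleGraph.forall_fromRel_adj_imp_ne {V α : Type*} (r : V → V → Prop) (f : V → α) :
    (∀ u v, (SimpleGraph.fromRel r).Adj u v → f u ≠ f v) ↔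
      ∀ u v, r u v → u ≠ v → f u ≠ f v := by
  simp only [SimpleGraph.fromRel_adj]
  refine ⟨fun h u v hr huv => h u v ⟨huv, .inl hr⟩, ?_⟩
  rintro h u v ⟨huv, hr | hr⟩
  · exact h u v hr huv
  · exact (h v u hr huv.symm).symm

section Counting

variable {α : Type*} [DecidableEq α]

theorem graphY_proper_iff {s t : ℕ} (f : Fin 5 ⊕ Fin s ⊕ Fin t → α) :
    (∀ u v, (graphY s t).Adj u v → f u ≠ f v) ↔
      f (.inl 1) ≠ f (.inl 2) ∧ f (.inl 3) ≠ f (.inl 4) ∧ f (.inl 1) ≠ f (.inl 4) ∧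
      (∀ i, f (.inr (.inl i)) ∉ (insert (f (.inl 3)) {f (.inl 0), f (.inl 1)} : Finset α)) ∧
      ∀ j, f (.inr (.inr j)) ∉ (insert (f (.inl 2)) {f (.inl 0), f (.inl 4)} : Finset α) := by
  rw [graphY, SimpleGraph.forall_fromRel_adj_imp_ne]
  simp [YAdj, XAdj, or_imp, forall_and]
  tauto

variable [Fintype α]

/-- Colourings of a vertex whose colour `z` must differ from `w`, together with `n` vertices whose
colours avoid `z` and `A`: this is how `v₃` with `S` and `v₂` with `T` are coloured once
`v₀, v₁, v₄` are. -/
def ExtColoring (n : ℕ) (A : Finset α) (w : α) : Type _ :=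
  Σ z : {z // z ≠ w}, Fin n → ↥(insert z.1 A)ᶜ

instance (n : ℕ) (A : Finset α) (w : α) : Fintype (ExtColoring n A w) := by
  unfold ExtColoring; infer_instance

def graphYColoringEquiv (s t : ℕ) :
    {f : Fin 5 ⊕ Fin s ⊕ Fin t → α // ∀ u v, (graphY s t).Adj u v → f u ≠ f v} ≃
      Σ (c₁ : α) (c₄ : {c // c ≠ c₁}) (c₀ : α),
        ExtColoring s {c₀, c₁} c₄ × ExtColoring t {c₀, c₄.1} c₁ where
  toFun f :=
    have hf := (graphY_proper_iff f.1).1 f.2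
    ⟨f.1 (.inl 1), ⟨f.1 (.inl 4), hf.2.2.1.symm⟩, f.1 (.inl 0),
      ⟨⟨f.1 (.inl 3), hf.2.1⟩,
        fun i => ⟨f.1 (.inr (.inl i)), mem_compl.2 (hf.2.2.2.1 i)⟩⟩,
      ⟨⟨f.1 (.inl 2), hf.1.symm⟩,
        fun j => ⟨f.1 (.inr (.inr j)), mem_compl.2 (hf.2.2.2.2 j)⟩⟩⟩
  invFun := fun ⟨c₁, c₄, c₀, ⟨c₃, σ⟩, ⟨c₂, τ⟩⟩ =>
    ⟨Sum.elim ![c₀, c₁, c₂.1, c₃.1, c₄.1] (Sum.elim (fun i => σ i) (fun j => τ j)),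
      (graphY_proper_iff _).2 ⟨c₂.2.symm, c₃.2, c₄.2.symm,
        fun i => mem_compl.1 (σ i).2, fun j => mem_compl.1 (τ j).2⟩⟩
  left_inv f := Subtype.ext <| funext fun v => by
    rcases v with m | i | j
    · fin_cases m <;> rfl
    · rfl
    · rfl
  right_inv := fun ⟨_, _, _, ⟨_, _⟩, ⟨_, _⟩⟩ => rfl

variable {R : Type*} [CommRing R]

theorem sum_apply_card_insert (A : Finset α) (φ : ℕ → R) :
    ∑ z, φ #(insert z A) = #A * φ #A + (Fintype.card α - #A) * φ (#A + 1) := by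
  have hin : ∀ z ∈ A, φ #(insert z A) = φ #A := fun z hz => by rw [insert_eq_of_mem hz]
  have hout : ∀ z ∈ Aᶜ, φ #(insert z A) = φ (#A + 1) := fun z hz => by
    rw [card_insert_of_notMem (mem_compl.1 hz)]
  rw [← sum_add_sum_compl A, sum_congr rfl hin, sum_congr rfl hout, sum_const, sum_const,
    card_compl, nsmul_eq_mul, nsmul_eq_mul, Nat.cast_sub (card_le_univ A)]

theorem card_extColoring (n : ℕ) (A : Finset α) (w : α) :
    (Fintype.card (ExtColoring n A w) : R) =
      let k : R := Fintype.card α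
      (#A : R) * (k - #A) ^ n + (k - #A) * (k - (#A + 1)) ^ n - (k - #(insert w A)) ^ n := by
  have hcast : ∀ z, (Fintype.card (Fin n → ↥(insert z A)ᶜ) : R) =
      ((Fintype.card α : R) - #(insert z A)) ^ n := fun z => by
    rw [Fintype.card_fun, Fintype.card_coe, card_compl, Fintype.card_fin, Nat.cast_pow,
      Nat.cast_sub (card_le_univ _)]
  have htotal := Fintype.sum_eq_add_sum_subtype_ne
    (fun z => ((Fintype.card α : R) - #(insert z A)) ^ n) w
  rw [sum_apply_card_insert (φ := fun m => ((Fintype.card α : R) - m) ^ n)] at htotal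
  unfold ExtColoring
  rw [Fintype.card_sigma, Nat.cast_sum]
  simp only [hcast]
  push_cast at htotal ⊢
  linear_combination -htotal

theorem card_extColoring_pair (n : ℕ) {x y w : α} (hyw : y ≠ w) :
    (Fintype.card (ExtColoring n {x, y} w) : R) =
      let k : R := Fintype.card α
      if x = y then (k - 1) ^ n + (k - 2) ^ (n + 1)
      else if x = w then (k - 2) ^ n + (k - 2) * (k - 3) ^ n
      else 2 * (k - 2) ^ n + (k - 3) ^ (n + 1) := by
  rw [card_extColoring]
  split_ifs with hxy hxw
  · subst hxy
    simp only [mem_singleton, insert_eq_of_mem, card_singleton, Nat.cast_one, one_mul,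
      card_pair hyw.symm, Nat.cast_ofNat]
    ring
  · subst hxw
    simp only [card_pair hxy, Nat.cast_ofNat, mem_insert, mem_singleton, true_or,
      insert_eq_of_mem]
    ring
  · have hwA : #(insert w {x, y}) = 3 := by
      rw [card_insert_of_notMem (by simp [Ne.symm hxw, hyw.symm]), card_pair hxy]
    simp only [card_pair hxy, Nat.cast_ofNat, hwA]
    ring

theorem sum_ite_mul_ite {y w : α} (hyw : y ≠ w) (a b c a' b' c' : R) :
    ∑ x, (if x = y then a else if x = w then b else c) *
        (if x = w then a' else if x = y then b' else c') =
      a * b' + b * a' + (Fintype.card α - 2) * (c * c') := by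
  have hcard : 2 ≤ Fintype.card α := Fintype.one_lt_card_iff.2 ⟨y, w, hyw⟩
  have hrest : ∀ x ∈ (univ.erase y).erase w,
      (if x = y then a else if x = w then b else c) *
        (if x = w then a' else if x = y then b' else c') = c * c' := fun x hx => by
    simp [ne_of_mem_erase hx, ne_of_mem_erase (mem_of_mem_erase hx)]
  rw [← add_sum_erase _ _ (mem_univ y),
    ← add_sum_erase _ _ (mem_erase.2 ⟨hyw.symm, mem_univ w⟩), sum_congr rfl hrest]
  simp only [↓reduceIte, hyw, hyw.symm, sum_const, mem_erase, ne_eq, not_false_eq_true, mem_univ,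
    and_self, card_erase_of_mem, card_univ, Nat.sub_sub, Nat.reduceAdd, nsmul_eq_mul,
    Nat.cast_sub hcard, Nat.cast_ofNat]
  ring

end Counting

-- The three summands are the cases `c₀ = c₁`, `c₀ = c₄` and `c₀ ∉ {c₁, c₄}` for the colours
-- of `v₀, v₁, v₄`.
def chromaticPolyY {R : Type*} [CommRing R] (s t : ℕ) (x : R) : R :=
  x * (x - 1) * (((x - 1) ^ s + (x - 2) ^ (s + 1)) * ((x - 2) ^ t + (x - 2) * (x - 3) ^ t)
    + ((x - 2) ^ s + (x - 2) * (x - 3) ^ s) * ((x - 1) ^ t + (x - 2) ^ (t + 1))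
    + (x - 2) * (2 * (x - 2) ^ s + (x - 3) ^ (s + 1)) * (2 * (x - 2) ^ t + (x - 3) ^ (t + 1)))

theorem numColorings_graphY (s t k : ℕ) :
    (numColorings (graphY s t) k : ℝ) = chromaticPolyY s t (k : ℝ) := by
  have hfiber : ∀ (c₁ : Fin k) (c₄ : {c // c ≠ c₁}), ∑ c₀ : Fin k,
      (Fintype.card (ExtColoring s {c₀, c₁} c₄) : ℝ) *
          Fintype.card (ExtColoring t {c₀, c₄.1} c₁) =
        ((k - 1) ^ s + (k - 2) ^ (s + 1)) * ((k - 2) ^ t + (k - 2) * (k - 3) ^ t)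
        + ((k - 2) ^ s + (k - 2) * (k - 3) ^ s) * ((k - 1) ^ t + (k - 2) ^ (t + 1))
        + (k - 2) * ((2 * (k - 2) ^ s + (k - 3) ^ (s + 1)) *
          (2 * (k - 2) ^ t + (k - 3) ^ (t + 1))) := by
    intro c₁ c₄
    simp only [card_extColoring_pair _ c₄.2.symm, card_extColoring_pair _ c₄.2, Fintype.card_fin]
    rw [sum_ite_mul_ite c₄.2.symm, Fintype.card_fin]
  rw [numColorings, Nat.card_congr (graphYColoringEquiv s t), Nat.card_eq_fintype_card]
  simp only [Fintype.card_sigma, Fintype.card_prod, Nat.cast_sum, Nat.cast_mul, hfiber, sum_const,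
    card_univ, nsmul_eq_mul, Fintype.card_subtype_compl, Fintype.card_subtype_eq, Fintype.card_fin]
  rcases Nat.eq_zero_or_pos k with rfl | hk
  · simp [chromaticPolyY]
  · rw [Nat.cast_sub hk, chromaticPolyY]
    ring

theorem eval_chromaticPolyY (s t : ℕ) (x : ℝ) :
    (chromaticPolyY s t (Polynomial.X : Polynomial ℝ)).eval x = chromaticPolyY s t x := by
  simp [chromaticPolyY]

theorem IsChromaticPolynomial.eq_chromaticPolyY {s t : ℕ} {P : Polynomial ℝ}
    (hP : IsChromaticPolynomial (graphY s t) P) : P = chromaticPolyY s t Polynomial.X := by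
  refine Polynomial.eq_of_infinite_eval_eq _ _
    (Set.infinite_of_injective_forall_mem Nat.cast_injective fun k : ℕ => ?_)
  rw [Set.mem_ofPred_eq, hP k, eval_chromaticPolyY, numColorings_graphY]

def chromaticPolyYCofactor (s t : ℕ) (u : ℝ) : ℝ :=
  ((1 - u) ^ s + u ^ (s + 1)) * ((1 + u) ^ t - u ^ (t - 1))
    + ((1 + u) ^ s - u ^ (s - 1)) * ((1 - u) ^ t + u ^ (t + 1))
    - ((1 + u) ^ (s + 1) - 2 * u ^ s) * ((1 + u) ^ (t + 1) - 2 * u ^ t)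

theorem chromaticPolyY_two_sub {s t : ℕ} (hs : Odd s) (ht : Odd t) (u : ℝ) :
    chromaticPolyY s t (2 - u) = (2 - u) * (1 - u) * u * chromaticPolyYCofactor s t u := by
  have h1 : 2 - u - 1 = 1 - u := by ring
  have h2 : 2 - u - 2 = -u := by ring
  have h3 : 2 - u - 3 = -(1 + u) := by ring
  rw [chromaticPolyY, chromaticPolyYCofactor, h1, h2, h3, hs.neg_pow, ht.neg_pow, hs.neg_pow,
    ht.neg_pow, hs.add_one.neg_pow, ht.add_one.neg_pow, hs.add_one.neg_pow, ht.add_one.neg_pow]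
  obtain ⟨m, rfl⟩ := hs
  obtain ⟨n, rfl⟩ := ht
  simp only [Nat.add_sub_cancel]
  ring

theorem chromaticPolyYCofactor_zero {s t : ℕ} (hs : 2 ≤ s) (ht : 2 ≤ t) :
    chromaticPolyYCofactor s t 0 = 1 := by
  simp [chromaticPolyYCofactor, show s ≠ 0 by omega, show t ≠ 0 by omega,
    show s - 1 ≠ 0 by omega, show t - 1 ≠ 0 by omega]

theorem chromaticPolyYCofactor_one_neg {s t : ℕ} (hs : s ≠ 0) (ht : t ≠ 0) :
    chromaticPolyYCofactor s t 1 < 0 := by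
  have hval : chromaticPolyYCofactor s t 1 =
      (2 ^ s - 1) + (2 ^ t - 1) - 4 * ((2 ^ s - 1) * (2 ^ t - 1)) := by
    simp only [chromaticPolyYCofactor, sub_self, zero_pow hs, zero_pow ht, one_pow, zero_add,
      one_mul, mul_one, pow_succ]
    ring
  have h2s : (1 : ℝ) ≤ 2 ^ s - 1 := by linarith [le_self_pow₀ (one_le_two (α := ℝ)) hs]
  have h2t : (1 : ℝ) ≤ 2 ^ t - 1 := by linarith [le_self_pow₀ (one_le_two (α := ℝ)) ht]
  rw [hval]
  nlinarith

theorem exists_chromaticPolyYCofactor_eq_zero {s t : ℕ} (hs : 2 ≤ s) (ht : 2 ≤ t) :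
    ∃ u ∈ Set.Ioo (0 : ℝ) 1, chromaticPolyYCofactor s t u = 0 :=
  intermediate_value_Ioo' zero_le_one
    (by unfold chromaticPolyYCofactor; fun_prop)
    ⟨chromaticPolyYCofactor_one_neg (by omega) (by omega),
      (chromaticPolyYCofactor_zero hs ht).symm ▸ zero_lt_one⟩

/-- For all odd `s, t ≥ 3`, the chromatic polynomial of `Y(s,t)` has a real root strictly
between `1` and `2`. -/
theorem graphY_has_chromatic_root_between_one_and_two (s t : ℕ) (hs : 3 ≤ s) (ht : 3 ≤ t)
    (hsodd : Odd s) (htodd : Odd t)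
    (P : Polynomial ℝ) (hP : IsChromaticPolynomial (graphY s t) P) :
    ∃ x : ℝ, 1 < x ∧ x < 2 ∧ P.eval x = 0 := by
  obtain ⟨u, ⟨hu0, hu1⟩, hu⟩ :=
    exists_chromaticPolyYCofactor_eq_zero (s := s) (t := t) (by omega) (by omega)
  refine ⟨2 - u, by linarith, by linarith, ?_⟩
  rw [hP.eq_chromaticPolyY, eval_chromaticPolyY, chromaticPolyY_two_sub hsodd htodd, hu, mul_zero]
end

section
/- If G is a finite loopless graph (simple graph) with n vertices and c connected components, then its chromatic polynomial P(G, x) is non-zero with sign (-1)^{n+c} for every real x ∈ (0, 1); that is, (-1)^{n+c} P(G, x) > 0 for all 0 < x < 1. -/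
/-!
Deletion–contraction. Contracting an edge `uv` removes one vertex, keeps the number `c` of
components, and `P(G) = P(G - uv) - P(G / uv)`. If `uv` is not a bridge, `G - uv` still has `n`
vertices and `c` components, so by induction `P(G - uv)` has sign `(-1)^(n+c)` on `(0, 1)` while
`P(G / uv)` has the opposite sign, and so does their difference. If `uv` is a bridge,
recolouring the component of `v` shows `P(G - uv) = x P(G / uv)`, hence
`P(G) = (x - 1) P(G / uv)`, and the negative factor `x - 1` flips the sign. The induction starts
at the edgeless graph, where `P = x^n` and `c = n`.
-/

open Polynomial

namespace SimpleGraph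

variable {V W : Type}

section Reachability

variable {G : SimpleGraph V} {H : SimpleGraph W}

lemma Reachable.lift (f : V → W) (hf : ∀ a b, G.Adj a b → H.Reachable (f a) (f b)) {a b : V}
    (h : G.Reachable a b) : H.Reachable (f a) (f b) := by
  rw [reachable_iff_reflTransGen] at h ⊢
  exact Relation.ReflTransGen.lift' f
    (fun a b hab => (reachable_iff_reflTransGen _ _).mp (hf a b hab)) _ _ h

def connectedComponentEquivOfReachable (f : V → W) (g : W → V)
    (hf : ∀ a b, G.Adj a b → H.Reachable (f a) (f b))
    (hg : ∀ a b, H.Adj a b → G.Reachable (g a) (g b))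
    (hgf : ∀ a, G.Reachable (g (f a)) a) (hfg : ∀ b, H.Reachable (f (g b)) b) :
    G.ConnectedComponent ≃ H.ConnectedComponent where
  toFun := Quot.map f fun _ _ => Reachable.lift f hf
  invFun := Quot.map g fun _ _ => Reachable.lift g hg
  left_inv := ConnectedComponent.ind fun a => ConnectedComponent.sound (hgf a)
  right_inv := ConnectedComponent.ind fun b => ConnectedComponent.sound (hfg b)

lemma card_connectedComponent_bot :
    Nat.card (⊥ : SimpleGraph V).ConnectedComponent = Nat.card V :=
  (Nat.card_eq_of_bijective _
    ⟨fun _ _ h => reachable_bot.mp (ConnectedComponent.exact h),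
      fun c => c.ind fun a => ⟨a, rfl⟩⟩).symm

variable {u v : V}

lemma card_connectedComponent_deleteEdges (hr : (G.deleteEdges {s(u, v)}).Reachable u v) :
    Nat.card (G.deleteEdges {s(u, v)}).ConnectedComponent = Nat.card G.ConnectedComponent := by
  refine Nat.card_congr (connectedComponentEquivOfReachable id id
    (fun a b hab => hab.reachable.mono (deleteEdges_le _)) (fun a b hab => ?_)
    Reachable.refl Reachable.refl)
  by_cases he : s(a, b) = s(u, v)
  · rcases Sym2.eq_iff.mp he with ⟨rfl, rfl⟩ | ⟨rfl, rfl⟩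
    exacts [hr, hr.symm]
  · exact (deleteEdges_adj.mpr ⟨hab, he⟩).reachable

lemma deleteEdges_lt_of_adj (h : G.Adj u v) : G.deleteEdges {s(u, v)} < G :=
  lt_of_le_of_ne (deleteEdges_le _) fun heq => by
    have : (G.deleteEdges {s(u, v)}).Adj u v := by rw [heq]; exact h
    simp at this

end Reachability

section Contraction

variable [DecidableEq V] {G : SimpleGraph V} {u v : V}

def mergeInto (huv : u ≠ v) (w : V) : {w // w ≠ v} :=
  if h : w = v then ⟨u, huv⟩ else ⟨w, h⟩

lemma mergeInto_coe (huv : u ≠ v) (w : {w // w ≠ v}) : mergeInto huv w = w := by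
  simp [mergeInto, w.2]

lemma mergeInto_surjective (huv : u ≠ v) : Function.Surjective (mergeInto huv) :=
  fun w => ⟨w, mergeInto_coe huv w⟩

lemma apply_mergeInto {α : Type*} {f : V → α} (huv : u ≠ v) (hf : f u = f v) (w : V) :
    f (mergeInto huv w) = f w := by
  by_cases h : w = v <;> simp [mergeInto, h, hf]

lemma Adj.reachable_mergeInto (h : G.Adj u v) (w : V) : G.Reachable w (mergeInto h.ne w) := by
  by_cases hw : w = v
  · subst hw
    simpa [mergeInto] using h.reachable.symm
  · simp [mergeInto, hw]

lemma mergeInto_ne_iff (huv : u ≠ v) {a b : V} (hab : G.Adj a b) :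
    mergeInto huv a ≠ mergeInto huv b ↔ s(a, b) ≠ s(u, v) := by
  rw [ne_eq, ← Subtype.val_inj, not_iff_not]
  by_cases ha : a = v <;> by_cases hb : b = v <;> simp_all [mergeInto, hab.ne, eq_comm]

/-- The contraction `G / uv`, with `v` merged into `u`. -/
def contractEdge (G : SimpleGraph V) (h : G.Adj u v) : SimpleGraph {w // w ≠ v} where
  Adj a b := a ≠ b ∧ ∃ a' b', G.Adj a' b' ∧ mergeInto h.ne a' = a ∧ mergeInto h.ne b' = b
  symm := ⟨fun _ _ ⟨hne, a', b', hadj, ha, hb⟩ => ⟨hne.symm, b', a', hadj.symm, hb, ha⟩⟩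
  loopless := ⟨fun _ h => h.1 rfl⟩

lemma contractEdge_adj (h : G.Adj u v) {a b : {w // w ≠ v}} :
    (G.contractEdge h).Adj a b ↔
      a ≠ b ∧ ∃ a' b', G.Adj a' b' ∧ mergeInto h.ne a' = a ∧ mergeInto h.ne b' = b :=
  Iff.rfl

lemma card_connectedComponent_contractEdge (h : G.Adj u v) :
    Nat.card (G.contractEdge h).ConnectedComponent = Nat.card G.ConnectedComponent := by
  refine Nat.card_congr (connectedComponentEquivOfReachable Subtype.val (mergeInto h.ne)
    (fun a b hab => ?_) (fun a b hab => ?_)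
    (fun a => by rw [mergeInto_coe]) (fun a => (h.reachable_mergeInto a).symm))
  · obtain ⟨-, a', b', hadj, rfl, rfl⟩ := (contractEdge_adj h).mp hab
    exact (h.reachable_mergeInto a').symm.trans (hadj.reachable.trans (h.reachable_mergeInto b'))
  · by_cases he : mergeInto h.ne a = mergeInto h.ne b
    · rw [he]
    · exact Adj.reachable ((contractEdge_adj h).mpr ⟨he, a, b, hab, rfl, rfl⟩)

end Contraction

section Colorings

variable {G : SimpleGraph V} {k : ℕ} {u v : V}

def properColorings (G : SimpleGraph V) (k : ℕ) : Set (V → Fin k) :=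
  {f | ∀ a b, G.Adj a b → f a ≠ f b}

lemma properColorings_eq_deleteEdges_diff (h : G.Adj u v) :
    G.properColorings k = (G.deleteEdges {s(u, v)}).properColorings k \ {f | f u = f v} := by
  ext f
  simp only [properColorings, Set.mem_sdiff, Set.mem_ofPred_eq, deleteEdges_adj,
    Set.mem_singleton_iff]
  refine ⟨fun hf => ⟨fun a b hab => hf a b hab.1, hf u v h⟩,
    fun ⟨hf, huv⟩ a b hab => ?_⟩
  by_cases he : s(a, b) = s(u, v)
  · rcases Sym2.eq_iff.mp he with ⟨rfl, rfl⟩ | ⟨rfl, rfl⟩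
    exacts [huv, Ne.symm huv]
  · exact hf a b ⟨hab, he⟩

open scoped Classical in
noncomputable def recolorComponent (G : SimpleGraph V) (v : V) (σ : Equiv.Perm (Fin k))
    (f : V → Fin k) : V → Fin k :=
  fun w => if G.Reachable w v then σ (f w) else f w

lemma recolorComponent_mem_properColorings (σ : Equiv.Perm (Fin k)) {f : V → Fin k}
    (hf : f ∈ G.properColorings k) : G.recolorComponent v σ f ∈ G.properColorings k := by
  intro a b hab
  have hiff : G.Reachable a v ↔ G.Reachable b v :=
    ⟨hab.symm.reachable.trans, hab.reachable.trans⟩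
  by_cases ha : G.Reachable a v
  · simpa [recolorComponent, ha, hiff.mp ha] using hf a b hab
  · simpa [recolorComponent, ha, hiff.not.mp ha] using hf a b hab

lemma recolorComponent_swap_involutive (a b : Fin k) :
    Function.Involutive (G.recolorComponent v (Equiv.swap a b)) := by
  intro f
  ext w
  by_cases hw : G.Reachable w v <;> simp [recolorComponent, hw]

lemma recolorComponent_apply_self (σ : Equiv.Perm (Fin k)) (f : V → Fin k) :
    G.recolorComponent v σ f v = σ (f v) := by
  simp [recolorComponent]

lemma recolorComponent_apply_of_not_reachable (σ : Equiv.Perm (Fin k)) (f : V → Fin k)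
    (hu : ¬ G.Reachable u v) : G.recolorComponent v σ f u = f u := by
  simp [recolorComponent, hu]

/-- Recolouring the component of `v` by a transposition moves the colour of `v` onto that of `u`
without touching `u`; the colour of `v` it started from is remembered in the second factor. -/
noncomputable def properColoringsEquivOfNotReachable (hnr : ¬ G.Reachable u v) :
    G.properColorings k ≃ ↥(G.properColorings k ∩ {f | f u = f v}) × Fin k where
  toFun f := (⟨G.recolorComponent v (Equiv.swap (f.1 u) (f.1 v)) f.1,
    recolorComponent_mem_properColorings _ f.2, by
      simp [recolorComponent_apply_self, recolorComponent_apply_of_not_reachable _ _ hnr]⟩, f.1 v)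
  invFun p := ⟨G.recolorComponent v (Equiv.swap (p.1.1 v) p.2) p.1.1,
    recolorComponent_mem_properColorings _ p.1.2.1⟩
  left_inv f := by
    ext1
    simp only [recolorComponent_apply_self, Equiv.swap_apply_right]
    exact recolorComponent_swap_involutive _ _ _
  right_inv := by
    rintro ⟨⟨f, -, huv⟩, c⟩
    have hu : G.recolorComponent v (Equiv.swap (f v) c) f u = f u :=
      recolorComponent_apply_of_not_reachable _ _ hnr
    have hv : G.recolorComponent v (Equiv.swap (f v) c) f v = c := by
      simp [recolorComponent_apply_self]
    refine Prod.ext (Subtype.ext ?_) hv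
    show G.recolorComponent v (Equiv.swap (G.recolorComponent v (Equiv.swap (f v) c) f u)
      (G.recolorComponent v (Equiv.swap (f v) c) f v))
        (G.recolorComponent v (Equiv.swap (f v) c) f) = f
    rw [hu, hv, show f u = f v from huv]
    exact recolorComponent_swap_involutive _ _ _

lemma properColorings_contractEdge_image [DecidableEq V] (h : G.Adj u v) :
    (· ∘ mergeInto h.ne) '' (G.contractEdge h).properColorings k =
      (G.deleteEdges {s(u, v)}).properColorings k ∩ {f | f u = f v} := by
  ext f
  constructor
  · rintro ⟨c, hc, rfl⟩
    refine ⟨fun a b hab => ?_, by simp [mergeInto, h.ne]⟩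
    obtain ⟨hab, he⟩ := deleteEdges_adj.mp hab
    exact hc _ _
      ((contractEdge_adj h).mpr ⟨(mergeInto_ne_iff h.ne hab).mpr he, a, b, hab, rfl, rfl⟩)
  · rintro ⟨hf, huv⟩
    refine ⟨f ∘ Subtype.val, ?_, funext (apply_mergeInto h.ne huv)⟩
    intro _ _ hab
    obtain ⟨hne, a, b, hadj, rfl, rfl⟩ := (contractEdge_adj h).mp hab
    simp only [Function.comp_apply, apply_mergeInto h.ne huv]
    exact hf a b (deleteEdges_adj.mpr ⟨hadj, (mergeInto_ne_iff h.ne hadj).mp hne⟩)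

variable [Fintype V]

lemma numColorings_eq_ncard (G : SimpleGraph V) (k : ℕ) :
    numColorings G k = (G.properColorings k).ncard :=
  Nat.card_coe_set_eq _

lemma numColorings_bot (k : ℕ) : numColorings (⊥ : SimpleGraph V) k = k ^ Fintype.card V := by
  have hall : (⊥ : SimpleGraph V).properColorings k = Set.univ := by
    ext f
    simp [properColorings]
  rw [numColorings_eq_ncard, hall, Set.ncard_univ, Nat.card_fun]
  simp

variable [DecidableEq V]

lemma numColorings_contractEdge (h : G.Adj u v) :
    numColorings (G.contractEdge h) k =
      ((G.deleteEdges {s(u, v)}).properColorings k ∩ {f | f u = f v}).ncard := by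
  rw [numColorings_eq_ncard, ← properColorings_contractEdge_image h,
    Set.ncard_image_of_injective _ (mergeInto_surjective h.ne).injective_comp_right]

lemma numColorings_deleteEdges (h : G.Adj u v) :
    numColorings (G.deleteEdges {s(u, v)}) k =
      numColorings G k + numColorings (G.contractEdge h) k := by
  rw [numColorings_contractEdge h, numColorings_eq_ncard, numColorings_eq_ncard,
    properColorings_eq_deleteEdges_diff h, add_comm, Set.ncard_inter_add_ncard_sdiff_eq_ncard]

lemma numColorings_deleteEdges_of_not_reachable (h : G.Adj u v)
    (hnr : ¬ (G.deleteEdges {s(u, v)}).Reachable u v) :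
    numColorings (G.deleteEdges {s(u, v)}) k = k * numColorings (G.contractEdge h) k := by
  rw [numColorings_contractEdge h, numColorings_eq_ncard, ← Nat.card_coe_set_eq,
    Nat.card_congr (properColoringsEquivOfNotReachable hnr), Nat.card_prod, Nat.card_coe_set_eq,
    Nat.card_fin, mul_comm]

end Colorings

end SimpleGraph

open SimpleGraph

section ChromaticPolynomial

variable {V : Type} [Fintype V] {G : SimpleGraph V}

lemma IsChromaticPolynomial.unique {P Q : ℝ[X]} (hP : IsChromaticPolynomial G P)
    (hQ : IsChromaticPolynomial G Q) : P = Q :=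
  eq_of_infinite_eval_eq P Q <| (Set.infinite_range_of_injective Nat.cast_injective).mono <| by
    rintro _ ⟨k, rfl⟩
    simp [hP k, hQ k]

lemma isChromaticPolynomial_bot :
    IsChromaticPolynomial (⊥ : SimpleGraph V) (X ^ Fintype.card V) :=
  fun k => by simp [numColorings_bot]

section Contraction

variable [DecidableEq V] {u v : V} {P Q : ℝ[X]}

lemma IsChromaticPolynomial.sub_of_deleteEdges_of_contractEdge (h : G.Adj u v)
    (hP : IsChromaticPolynomial (G.deleteEdges {s(u, v)}) P)
    (hQ : IsChromaticPolynomial (G.contractEdge h) Q) : IsChromaticPolynomial G (P - Q) := by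
  intro k
  rw [eval_sub, hP k, hQ k, numColorings_deleteEdges h]
  push_cast
  ring

lemma IsChromaticPolynomial.X_sub_one_mul_of_not_reachable (h : G.Adj u v)
    (hnr : ¬ (G.deleteEdges {s(u, v)}).Reachable u v)
    (hQ : IsChromaticPolynomial (G.contractEdge h) Q) : IsChromaticPolynomial G ((X - 1) * Q) := by
  intro k
  have hsum := numColorings_deleteEdges (k := k) h
  rw [numColorings_deleteEdges_of_not_reachable h hnr] at hsum
  have hsumR : (k : ℝ) * numColorings (G.contractEdge h) k =
      numColorings G k + numColorings (G.contractEdge h) k := by exact_mod_cast hsum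
  rw [eval_mul, eval_sub, eval_X, eval_one, hQ k]
  linarith

end Contraction

end ChromaticPolynomial

def SignOnUnitInterval (P : ℝ[X]) (m : ℕ) : Prop :=
  ∀ x : ℝ, 0 < x → x < 1 → 0 < (-1 : ℝ) ^ m * P.eval x

lemma signOnUnitInterval_X_pow (n : ℕ) : SignOnUnitInterval (X ^ n) (n + n) := fun x hx _ => by
  simpa [← two_mul, pow_mul] using pow_pos hx n

lemma SignOnUnitInterval.sub {P Q : ℝ[X]} {m : ℕ} (hP : SignOnUnitInterval P (m + 1))
    (hQ : SignOnUnitInterval Q m) : SignOnUnitInterval (P - Q) (m + 1) := fun x hx0 hx1 => by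
  have hPx := hP x hx0 hx1
  have hQx := hQ x hx0 hx1
  rw [pow_succ] at hPx ⊢
  rw [eval_sub]
  linarith

lemma SignOnUnitInterval.X_sub_one_mul {Q : ℝ[X]} {m : ℕ} (hQ : SignOnUnitInterval Q m) :
    SignOnUnitInterval ((X - 1) * Q) (m + 1) := fun x hx0 hx1 => by
  have : (-1 : ℝ) ^ (m + 1) * ((X - 1) * Q).eval x = (1 - x) * ((-1) ^ m * Q.eval x) := by
    simp only [eval_mul, eval_sub, eval_X, eval_one, pow_succ]
    ring
  rw [this]
  exact mul_pos (by linarith) (hQ x hx0 hx1)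

theorem exists_isChromaticPolynomial_signOnUnitInterval {V : Type} [Fintype V]
    (G : SimpleGraph V) :
    ∃ P, IsChromaticPolynomial G P ∧
      SignOnUnitInterval P (Fintype.card V + Nat.card G.ConnectedComponent) := by
  classical
  -- contraction lowers the number of vertices; deletion keeps `V` and gives a smaller graph
  induction hn : Fintype.card V using Nat.strong_induction_on generalizing V with
  | _ n ihV =>
  subst hn
  induction G using WellFoundedLT.induction with
  | _ G ihG =>
  rcases eq_or_ne G ⊥ with rfl | hG
  · refine ⟨_, isChromaticPolynomial_bot, ?_⟩
    rw [card_connectedComponent_bot, Nat.card_eq_fintype_card]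
    exact signOnUnitInterval_X_pow _
  obtain ⟨u, v, h⟩ := ne_bot_iff_exists_adj.mp hG
  have hcard : Fintype.card V = Fintype.card {w // w ≠ v} + 1 := by
    rw [Fintype.card_subtype_compl, Fintype.card_subtype_eq]
    have := Fintype.card_pos_iff.mpr ⟨v⟩
    omega
  obtain ⟨Q, hQ, hQsign⟩ := ihV _ (by omega) (G.contractEdge h) rfl
  rw [card_connectedComponent_contractEdge] at hQsign
  rw [hcard, add_right_comm]
  by_cases hr : (G.deleteEdges {s(u, v)}).Reachable u v
  · obtain ⟨P, hP, hPsign⟩ := ihG _ (deleteEdges_lt_of_adj h)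
    rw [card_connectedComponent_deleteEdges hr, hcard, add_right_comm] at hPsign
    exact ⟨P - Q, hP.sub_of_deleteEdges_of_contractEdge h hQ, hPsign.sub hQsign⟩
  · exact ⟨(X - 1) * Q, hQ.X_sub_one_mul_of_not_reachable h hr, hQsign.X_sub_one_mul⟩

/-- If `G` is a finite loopless (simple) graph with `n` vertices and `c` connected
components, then its chromatic polynomial is non-zero with sign `(-1)^(n+c)` for every
real `x` with `0 < x < 1`. -/
theorem chromaticPolynomial_sign_zero_one {V : Type} [Fintype V] (G : SimpleGraph V)
    (P : Polynomial ℝ) (hP : IsChromaticPolynomial G P) :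
    ∀ x : ℝ, 0 < x → x < 1 →
      0 < (-1 : ℝ) ^ (Fintype.card V + Nat.card G.ConnectedComponent) * P.eval x := by
  obtain ⟨Q, hQ, hQsign⟩ := exists_isChromaticPolynomial_signOnUnitInterval G
  rw [hP.unique hQ]
  exact hQsign
end
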